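/- arXiv:quant-ph/0010076 — 2 statements merged into one kernel-verified Lean document; each statement's English description precedes it below -/
import Mathlib

section
/- Let E be a finite group with E' ⊆ Z(E) (nilpotent of class at most 2), and let N ⊴ E. If χ is an irreducible complex character of N that is faithful on Z(E) ∩ N, then the support of χ equals the center of N: {n ∈ N | χ(n) ≠ 0} = Z(N). -/
/-!
Let `n ∈ N` with `χ n ≠ 0` and `m ∈ N`. Since `E' ⊆ Z(E)`, the commutator `c = ⁅m, n⁆`
is central in `E`, hence in `N`, so by Schur's lemma `ρ c` is a scalar `μ`.
As `c * n = m n m⁻¹`, `χ n = χ (c * n) = μ χ n`, so `μ = 1`, i.e. `χ c = χ 1`;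
faithfulness on `Z(E) ∩ N` gives `c = 1`. Conversely a central element acts by an
invertible scalar, whose trace is nonzero.
-/

open scoped BigOperators

/-- A representation is irreducible if it is nonzero and has no proper nontrivial
invariant subspaces. -/
def RepIrreducible {G V : Type*} [Monoid G] [AddCommGroup V] [Module ℂ V]
    (ρ : Representation ℂ G V) : Prop :=
  (⊤ : Submodule ℂ V) ≠ ⊥ ∧
    ∀ U : Submodule ℂ V, (∀ g v, v ∈ U → ρ g v ∈ U) → U = ⊥ ∨ U = ⊤

/-- The character of a representation. -/
noncomputable def repChar {G V : Type*} [Monoid G] [AddCommGroup V] [Module ℂ V]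
    (ρ : Representation ℂ G V) (g : G) : ℂ := LinearMap.trace ℂ V (ρ g)

section Character

variable {G V : Type*} [AddCommGroup V] [Module ℂ V]

theorem repChar_one [Monoid G] [FiniteDimensional ℂ V] (ρ : Representation ℂ G V) :
    repChar ρ 1 = Module.finrank ℂ V := by
  rw [repChar, map_one, LinearMap.trace_one]

theorem repChar_mul_comm [Monoid G] (ρ : Representation ℂ G V) (g h : G) :
    repChar ρ (g * h) = repChar ρ (h * g) := by
  rw [repChar, repChar, ρ.map_mul, ρ.map_mul, LinearMap.trace_mul_comm]

theorem repChar_conj [Group G] (ρ : Representation ℂ G V) (g h : G) :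
    repChar ρ (MulAut.conj g h) = repChar ρ h := by
  rw [MulAut.conj_apply, repChar_mul_comm, inv_mul_cancel_left]

theorem repChar_mul_of_eq_smul_one [Monoid G] (ρ : Representation ℂ G V) {c : G} {μ : ℂ}
    (hc : ρ c = μ • 1) (g : G) : repChar ρ (c * g) = μ * repChar ρ g := by
  rw [repChar, repChar, ρ.map_mul, hc, smul_mul_assoc, one_mul, map_smul, smul_eq_mul]

end Character

namespace RepIrreducible

variable {G V : Type*} [AddCommGroup V] [Module ℂ V]

theorem nontrivial [Monoid G] {ρ : Representation ℂ G V} (hρ : RepIrreducible ρ) :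
    Nontrivial V :=
  (Submodule.nontrivial_iff ℂ).mp (nontrivial_of_ne _ _ hρ.1)

variable [FiniteDimensional ℂ V]

theorem exists_eq_smul_one_of_commute [Monoid G] {ρ : Representation ℂ G V}
    (hρ : RepIrreducible ρ) (f : Module.End ℂ V) (hf : ∀ g, Commute f (ρ g)) :
    ∃ μ : ℂ, f = μ • 1 := by
  have := hρ.nontrivial
  obtain ⟨μ, hμ⟩ := Module.End.exists_eigenvalue f
  have hinv : ∀ g v, v ∈ f.eigenspace μ → ρ g v ∈ f.eigenspace μ := by
    intro g v hv
    rw [Module.End.mem_eigenspace_iff] at hv ⊢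
    rw [← Module.End.mul_apply, hf g, Module.End.mul_apply, hv, map_smul]
  rcases hρ.2 _ hinv with hbot | htop
  · exact absurd hbot hμ
  · refine ⟨μ, LinearMap.ext fun v => ?_⟩
    exact Module.End.mem_eigenspace_iff.mp (htop ▸ Submodule.mem_top)

theorem exists_eq_smul_one_of_mem_center [Group G] {ρ : Representation ℂ G V}
    (hρ : RepIrreducible ρ) {c : G} (hc : c ∈ Subgroup.center G) :
    ∃ μ : ℂ, ρ c = μ • 1 :=
  hρ.exists_eq_smul_one_of_commute _ fun g =>
    Commute.map (Commute.symm (Subgroup.mem_center_iff.mp hc g)) ρ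

theorem repChar_ne_zero_of_mem_center [Group G] {ρ : Representation ℂ G V}
    (hρ : RepIrreducible ρ) {c : G} (hc : c ∈ Subgroup.center G) : repChar ρ c ≠ 0 := by
  have := hρ.nontrivial
  obtain ⟨μ, hμ⟩ := hρ.exists_eq_smul_one_of_mem_center hc
  have hμ0 : μ ≠ 0 := by
    rintro rfl
    have h : ρ c⁻¹ * ρ c = 1 := by rw [← map_mul, inv_mul_cancel, map_one]
    rw [hμ, zero_smul, mul_zero] at h
    exact zero_ne_one h
  rw [← mul_one c, repChar_mul_of_eq_smul_one ρ hμ, repChar_one]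
  exact mul_ne_zero hμ0 (Nat.cast_ne_zero.mpr Module.finrank_pos.ne')

theorem eq_one_of_repChar_mul_eq [Group G] {ρ : Representation ℂ G V}
    (hρ : RepIrreducible ρ) {c g : G} (hc : c ∈ Subgroup.center G) (hg : repChar ρ g ≠ 0)
    (hcg : repChar ρ (c * g) = repChar ρ g) : ρ c = 1 := by
  obtain ⟨μ, hμ⟩ := hρ.exists_eq_smul_one_of_mem_center hc
  rw [repChar_mul_of_eq_smul_one ρ hμ] at hcg
  rw [hμ, mul_eq_right₀ hg |>.mp hcg, one_smul]

end RepIrreducible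

open scoped commutatorElement

theorem Subgroup.mem_center_of_coe_mem_center {E : Type*} [Group E] {N : Subgroup E} {c : N}
    (hc : (c : E) ∈ Subgroup.center E) : c ∈ Subgroup.center N :=
  Subgroup.mem_center_iff.mpr fun g => Subtype.ext (Subgroup.mem_center_iff.mp hc g)

theorem coe_commutatorElement_mem_center {E : Type*} [Group E]
    (hE : commutator E ≤ Subgroup.center E) {N : Subgroup E} (a b : N) :
    ((⁅a, b⁆ : N) : E) ∈ Subgroup.center E := by
  rw [← N.coe_subtype, map_commutatorElement]
  exact hE (commutator_def E ▸
    Subgroup.commutator_mem_commutator (Subgroup.mem_top _) (Subgroup.mem_top _))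

theorem support_of_char_eq_center_general
    {E V : Type*} [Group E]
    [AddCommGroup V] [Module ℂ V] [FiniteDimensional ℂ V]
    (hE : commutator E ≤ Subgroup.center E)
    (N : Subgroup E)
    (ρ : Representation ℂ ↥N V) (hirr : RepIrreducible ρ)
    (χ : ↥N → ℂ) (hχ : χ = repChar ρ)
    (hfaith : ∀ z : E, z ∈ Subgroup.center E → ∀ hz : z ∈ N,
      χ ⟨z, hz⟩ = χ 1 → z = 1) :
    ∀ n : ↥N, χ n ≠ 0 ↔ n ∈ Subgroup.center ↥N := by
  subst hχ
  refine fun n => ⟨fun hn => Subgroup.mem_center_iff.mpr fun m => ?_,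
    hirr.repChar_ne_zero_of_mem_center⟩
  have hcE := coe_commutatorElement_mem_center hE m n
  have hρc : ρ ⁅m, n⁆ = 1 := hirr.eq_one_of_repChar_mul_eq
    (Subgroup.mem_center_of_coe_mem_center hcE) hn
    (by rw [← conj_eq_commutatorElement_mul, repChar_conj])
  have hc : ⁅m, n⁆ = 1 :=
    Subtype.ext <| hfaith _ hcE _ (by rw [repChar, hρc, ← map_one ρ]; rfl)
  exact commutatorElement_eq_one_iff_mul_comm.mp hc

/-- If `E' ⊆ Z(E)`, `N ⊴ E`, and `χ ∈ Irr(N)` is faithful on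
`Z(E) ∩ N`, then the support of `χ` is exactly the center `Z(N)`. -/
theorem support_of_char_eq_center
    {E V : Type*} [Group E] [Finite E]
    [AddCommGroup V] [Module ℂ V] [FiniteDimensional ℂ V]
    (hE : commutator E ≤ Subgroup.center E)
    (N : Subgroup E) [N.Normal]
    (ρ : Representation ℂ ↥N V) (hirr : RepIrreducible ρ)
    (χ : ↥N → ℂ) (hχ : χ = repChar ρ)
    (hfaith : ∀ z : E, z ∈ Subgroup.center E → ∀ hz : z ∈ N,
      χ ⟨z, hz⟩ = χ 1 → z = 1) :
    ∀ n : ↥N, χ n ≠ 0 ↔ n ∈ Subgroup.center ↥N :=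
  support_of_char_eq_center_general hE N ρ hirr χ hχ hfaith
end

section
/- Let E be a finite abstract error group with abelian index group E/Z(E), ρ: E → U(V) a faithful irreducible unitary representation with character φ of degree [E:Z(E)]^{1/2}, N ⊴ E, and χ an irreducible constituent of φ↓N. Let φ_Z be the linear character of Z = Z(N) with χ↓Z = χ(1)φ_Z, and let e_χ and e_{φ_Z} be the corresponding orthogonal projections on V. Then im(e_χ) = im(e_{φ_Z}); i.e., every Clifford code for N is a stabilizer code for the abelian group Z(N). -/
open scoped BigOperators

/-!
Since `E/Z(E)` is abelian, every commutator `[n⁻¹, h]` of elements of `N` is central in `E`,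
so `ρ` and `σ` act on it by scalars. The constituent hypothesis `⟨χ, φ↓N⟩ ≠ 0` forces these two
scalars to agree, and faithfulness of `ρ` makes the scalar differ from `1` whenever `n` and `h` do
not commute. Comparing `χ(n [n⁻¹, h]) = χ(h n h⁻¹) = χ(n)` shows that `χ` vanishes off `Z(N)`.
Hence the sum defining `e_χ` runs over `Z(N)` only, where `χ = χ(1) φ_Z`, and `e_χ` is the nonzero
multiple `χ(1)² |Z(N)| / |N|` of `e_{φ_Z}`.
-/

section Character

variable {G V : Type*} [AddCommGroup V] [Module ℂ V]

theorem RepIrreducible.nontrivial_s15 [Monoid G] {ρ : Representation ℂ G V}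
    (hρ : RepIrreducible ρ) : Nontrivial V := by
  by_contra h
  rw [not_nontrivial_iff_subsingleton] at h
  exact hρ.1 (Subsingleton.elim _ _)

theorem RepIrreducible.exists_eq_smul_id_of_commute [Monoid G] [FiniteDimensional ℂ V]
    {ρ : Representation ℂ G V} (hρ : RepIrreducible ρ) (T : Module.End ℂ V)
    (hT : ∀ g, Commute T (ρ g)) : ∃ μ : ℂ, T = μ • LinearMap.id := by
  have := hρ.nontrivial_s15
  obtain ⟨μ, hμ⟩ := Module.End.exists_eigenvalue T
  refine ⟨μ, ?_⟩
  have hinv : ∀ g v, v ∈ T.eigenspace μ → ρ g v ∈ T.eigenspace μ := by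
    intro g v hv
    rw [Module.End.mem_eigenspace_iff] at hv ⊢
    rw [← Module.End.mul_apply, (hT g).eq, Module.End.mul_apply, hv, map_smul]
  rcases hρ.2 _ hinv with hbot | htop
  · exact absurd hbot hμ
  · ext v
    simpa [Module.End.mem_eigenspace_iff] using htop.ge (Submodule.mem_top (x := v))

theorem RepIrreducible.exists_eq_smul_id_of_mem_center [Group G] [FiniteDimensional ℂ V]
    {ρ : Representation ℂ G V} (hρ : RepIrreducible ρ) {c : G} (hc : c ∈ Subgroup.center G) :
    ∃ μ : ℂ, ρ c = μ • LinearMap.id :=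
  hρ.exists_eq_smul_id_of_commute _ fun g => by
    rw [Commute, SemiconjBy, ← map_mul, ← map_mul, Subgroup.mem_center_iff.mp hc g]

theorem repChar_mul_left_of_eq_smul_id [Monoid G] {ρ : Representation ℂ G V} {c : G} {μ : ℂ}
    (hc : ρ c = μ • LinearMap.id) (g : G) : repChar ρ (c * g) = μ * repChar ρ g := by
  rw [repChar, repChar, map_mul, hc, ← Module.End.one_eq_id, smul_one_mul, map_smul,
    smul_eq_mul]

theorem repChar_mul_right_of_eq_smul_id [Monoid G] {ρ : Representation ℂ G V} {c : G} {μ : ℂ}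
    (hc : ρ c = μ • LinearMap.id) (g : G) : repChar ρ (g * c) = μ * repChar ρ g := by
  rw [repChar, repChar, map_mul, hc, ← Module.End.one_eq_id, mul_smul_one, map_smul,
    smul_eq_mul]

/-- A character vanishes at `g` as soon as the commutator `[g⁻¹, h]` acts by a scalar `≠ 1`,
because `g [g⁻¹, h] = h (g h⁻¹)` is conjugate to `g`. -/
theorem repChar_eq_zero_of_commutator_eq_smul_id [Group G]
    {ρ : Representation ℂ G V} {g h : G} {μ : ℂ} (hc : ρ (g⁻¹ * h * g * h⁻¹) = μ • LinearMap.id)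
    (hμ : μ ≠ 1) : repChar ρ g = 0 := by
  have hconj : repChar ρ (g * (g⁻¹ * h * g * h⁻¹)) = repChar ρ g := by
    rw [show g * (g⁻¹ * h * g * h⁻¹) = h * (g * h⁻¹) by group, repChar_mul_comm,
      inv_mul_cancel_right]
  rw [repChar_mul_right_of_eq_smul_id hc] at hconj
  have : (μ - 1) * repChar ρ g = 0 := by rw [sub_mul, hconj, one_mul, sub_self]
  exact (mul_eq_zero.mp this).resolve_left (sub_ne_zero.mpr hμ)

end Character

section Restriction

variable {E V W : Type*} [Group E] [AddCommGroup V] [Module ℂ V] [AddCommGroup W] [Module ℂ W]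
  {N : Subgroup E} [Fintype N] {ρ : Representation ℂ E V} {σ : Representation ℂ N W}

/-- Translating `n ↦ n z` multiplies `⟨χ, φ↓N⟩` both by `ν` and by `μ`. -/
theorem eq_of_sum_repChar_mul_repChar_inv_ne_zero {z : N} {μ ν : ℂ}
    (hρz : ρ z = μ • LinearMap.id) (hσz : σ z = ν • LinearMap.id)
    (hconst : ∑ n : N, repChar σ n * repChar ρ ((n⁻¹ : N) : E) ≠ 0) : ν = μ := by
  set S := ∑ n : N, repChar σ n * repChar ρ ((n⁻¹ : N) : E)
  have hS : μ * S = ν * S := by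
    rw [Finset.mul_sum, Finset.mul_sum, ← Equiv.sum_comp (Equiv.mulRight z)]
    refine Finset.sum_congr rfl fun n _ => ?_
    have hφ : μ * repChar ρ (((n * z)⁻¹ : N) : E) = repChar ρ ((n⁻¹ : N) : E) := by
      rw [← repChar_mul_left_of_eq_smul_id hρz, ← Subgroup.coe_mul, mul_inv_rev,
        mul_inv_cancel_left]
    rw [Equiv.coe_mulRight, repChar_mul_right_of_eq_smul_id hσz, ← hφ]
    ring
  exact (mul_right_cancel₀ hconst hS).symm

theorem repChar_eq_zero_of_notMem_center [FiniteDimensional ℂ V] [FiniteDimensional ℂ W]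
    (hE : commutator E ≤ Subgroup.center E) (hρirr : RepIrreducible ρ)
    (hρfaith : Function.Injective ρ) (hσirr : RepIrreducible σ)
    (hconst : ∑ n : N, repChar σ n * repChar ρ ((n⁻¹ : N) : E) ≠ 0)
    {n : N} (hn : n ∉ Subgroup.center N) : repChar σ n = 0 := by
  obtain ⟨h, hnh⟩ : ∃ h : N, h * n ≠ n * h := by
    simpa [Subgroup.mem_center_iff] using hn
  set c : N := n⁻¹ * h * n * h⁻¹
  have hcE : (c : E) ∈ Subgroup.center E := hE <| by
    rw [commutator_def]
    simpa [c, commutatorElement_def] using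
      Subgroup.commutator_mem_commutator (Subgroup.mem_top ((n : E)⁻¹)) (Subgroup.mem_top (h : E))
  have hcN : c ∈ Subgroup.center N :=
    Subgroup.mem_center_iff.mpr fun g => Subtype.ext (Subgroup.mem_center_iff.mp hcE g)
  obtain ⟨μ, hρc⟩ := hρirr.exists_eq_smul_id_of_mem_center hcE
  obtain ⟨ν, hσc⟩ := hσirr.exists_eq_smul_id_of_mem_center hcN
  have hμ : μ ≠ 1 := by
    rintro rfl
    have hc1 : c = 1 := Subtype.ext <| hρfaith <| by
      rw [hρc, one_smul, OneMemClass.coe_one, map_one]; rfl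
    exact hnh <| calc
      h * n = n * c * h := by simp only [c]; group
      _ = n * h := by rw [hc1, mul_one]
  exact repChar_eq_zero_of_commutator_eq_smul_id hσc
    (eq_of_sum_repChar_mul_repChar_inv_ne_zero hρc hσc hconst ▸ hμ)

end Restriction

theorem clifford_code_is_stabilizer_code_general
    {E V W : Type*} [Group E]
    [NormedAddCommGroup V] [InnerProductSpace ℂ V] [FiniteDimensional ℂ V]
    [AddCommGroup W] [Module ℂ W] [FiniteDimensional ℂ W]
    (hE : commutator E ≤ Subgroup.center E)
    (ρ : Representation ℂ E V) (hρirr : RepIrreducible ρ)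
    (hρfaith : Function.Injective ρ)
    (φ : E → ℂ) (hφ : φ = repChar ρ)
    (N : Subgroup E) [Fintype ↥N]
    (σ : Representation ℂ ↥N W) (hσirr : RepIrreducible σ)
    (χ : ↥N → ℂ) (hχ : χ = repChar σ)
    (hconst : (Fintype.card ↥N : ℂ)⁻¹ * ∑ n : ↥N, χ n * φ ((n⁻¹ : ↥N) : E) ≠ 0)
    (M : Subgroup E) (hM : M = (Subgroup.center ↥N).map N.subtype) [Fintype ↥M]
    (φZ : ↥M →* ℂ)
    (hφZ : ∀ (z : ↥M) (hz : (z : E) ∈ N), χ ⟨(z : E), hz⟩ = χ 1 * φZ z)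
    (eχ eφZ : V →ₗ[ℂ] V)
    (heχ : eχ = (χ 1 / (Fintype.card ↥N : ℂ)) • ∑ n : ↥N, χ n⁻¹ • (ρ (n : E) : V →ₗ[ℂ] V))
    (heφZ : eφZ = ((Fintype.card ↥M : ℂ))⁻¹ • ∑ z : ↥M, φZ z⁻¹ • (ρ (z : E) : V →ₗ[ℂ] V)) :
    LinearMap.range eχ = LinearMap.range eφZ := by
  subst hφ hχ heχ heφZ
  have hmemM : ∀ n : N, (n : E) ∈ M ↔ n ∈ Subgroup.center N := fun n => by
    rw [hM]
    exact Subgroup.mem_map_iff_mem N.subtype_injective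
  have hMN : M ≤ N := hM ▸ Subgroup.map_subtype_le _
  have hsum : ∑ n : N, repChar σ n⁻¹ • ρ n = repChar σ 1 • ∑ z : M, φZ z⁻¹ • ρ z := by
    rw [Finset.smul_sum]
    refine (Fintype.sum_of_injective (Subgroup.inclusion hMN) (Subgroup.inclusion_injective hMN)
      _ _ (fun n hn => ?_) (fun z => ?_)).symm
    · have hnZ : n⁻¹ ∉ Subgroup.center N := fun hnZ =>
        hn ⟨⟨n, (hmemM n).mpr (inv_mem_iff.mp hnZ)⟩, rfl⟩
      rw [repChar_eq_zero_of_notMem_center hE hρirr hρfaith hσirr (right_ne_zero_of_mul hconst)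
        hnZ, zero_smul]
    · rw [← mul_smul, ← hφZ z⁻¹ (hMN z⁻¹.2)]
      rfl
  have := hσirr.nontrivial_s15
  have hχ1 : repChar σ 1 ≠ 0 := by
    rw [repChar_one]
    exact_mod_cast Module.finrank_pos.ne'
  rw [hsum, smul_smul, LinearMap.range_smul _ _ (mul_ne_zero (div_ne_zero hχ1 (by simp)) hχ1),
    LinearMap.range_smul _ _ (by simp)]

/-- For an abstract error group `E` with abelian index group
(`E' ⊆ Z(E)`), a faithful irreducible unitary representation `ρ` of degree
`[E:Z(E)]^{1/2}`, `N ⊴ E`, and `χ` an irreducible constituent of `φ↓N`, the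
orthogonal projections `e_χ` and `e_{φ_Z}` have the same image: every Clifford code
for `N` is a stabilizer code for the abelian group `Z(N)`. -/
theorem clifford_code_is_stabilizer_code
    {E V W : Type*} [Group E] [Fintype E]
    [NormedAddCommGroup V] [InnerProductSpace ℂ V] [FiniteDimensional ℂ V]
    [AddCommGroup W] [Module ℂ W] [FiniteDimensional ℂ W]
    (hE : commutator E ≤ Subgroup.center E)
    (ρ : Representation ℂ E V) (hρirr : RepIrreducible ρ)
    (hρfaith : Function.Injective ρ)
    (hunit : ∀ (g : E) (v w : V), (inner ℂ (ρ g v) (ρ g w) : ℂ) = inner ℂ v w)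
    (φ : E → ℂ) (hφ : φ = repChar ρ)
    (hdeg : φ 1 * φ 1 = ((Subgroup.center E).index : ℂ))
    (N : Subgroup E) [N.Normal] [Fintype ↥N]
    (σ : Representation ℂ ↥N W) (hσirr : RepIrreducible σ)
    (χ : ↥N → ℂ) (hχ : χ = repChar σ)
    (hconst : (Fintype.card ↥N : ℂ)⁻¹ * ∑ n : ↥N, χ n * φ ((n⁻¹ : ↥N) : E) ≠ 0)
    (M : Subgroup E) (hM : M = (Subgroup.center ↥N).map N.subtype) [Fintype ↥M]
    (φZ : ↥M →* ℂ)
    (hφZ : ∀ (z : ↥M) (hz : (z : E) ∈ N), χ ⟨(z : E), hz⟩ = χ 1 * φZ z)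
    (eχ eφZ : V →ₗ[ℂ] V)
    (heχ : eχ = (χ 1 / (Fintype.card ↥N : ℂ)) • ∑ n : ↥N, χ n⁻¹ • (ρ (n : E) : V →ₗ[ℂ] V))
    (heφZ : eφZ = ((Fintype.card ↥M : ℂ))⁻¹ • ∑ z : ↥M, φZ z⁻¹ • (ρ (z : E) : V →ₗ[ℂ] V)) :
    LinearMap.range eχ = LinearMap.range eφZ :=
  clifford_code_is_stabilizer_code_general hE ρ hρirr hρfaith φ hφ N σ hσirr χ hχ hconst M hM φZ hφZ
    eχ eφZ heχ heφZ
end
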